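/- arXiv:1505.00821 — 2 statements merged into one kernel-verified Lean document; each statement's English description precedes it below -/
import Mathlib

section
/- Let A2 and B2 be p×r real matrices with orthonormal columns. Then (1/r) tr(A2'(I_p - B2 B2')A2) ≤ ||A2'(A2 A2' - B2 B2')A2||_2 ≤ 2 ||B2 - A2||_2^2, where ||·||_2 denotes the spectral norm. In particular D(B2,A2) ≤ √2 ||B2 - A2||_2. -/
/-!
With `Q = 1 - B Bᵀ`, the orthogonal projection onto the complement of the column space of `B`,
one has `Aᵀ (A Aᵀ - B Bᵀ) A = Aᵀ Q A = (Q A)ᵀ (Q A)` and `Q A = Q (A - B)` since `Q B = 0`.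
Hence the spectral norm of this matrix is `‖Q (A - B)‖² ≤ ‖A - B‖²`, as `‖Q‖ ≤ 1`.
The normalised trace of a matrix is at most its spectral norm because every diagonal entry is,
and `D(B, A)² = (1/r) tr (Aᵀ Q A)`.
-/

open Matrix

/-- The operator (spectral) norm of a real matrix, i.e. the norm of the induced
linear map between Euclidean spaces. -/
noncomputable def specNorm {m n : ℕ} (M : Matrix (Fin m) (Fin n) ℝ) : ℝ :=
  ‖LinearMap.toContinuousLinearMap (Matrix.toEuclideanLin M)‖

open scoped Matrix.Norms.L2Operator

namespace Matrix

section L2OpNorm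

variable {𝕜 m n : Type*} [RCLike 𝕜] [Fintype m] [Fintype n] [DecidableEq n]

theorem norm_entry_le_l2_opNorm (A : Matrix m n 𝕜) (i : m) (j : n) : ‖A i j‖ ≤ ‖A‖ :=
  calc ‖A i j‖ = ‖(EuclideanSpace.equiv m 𝕜).symm (A *ᵥ EuclideanSpace.single j 1) i‖ := by
        simp [mulVec_single]
    _ ≤ ‖(EuclideanSpace.equiv m 𝕜).symm (A *ᵥ EuclideanSpace.single j 1)‖ :=
        PiLp.norm_apply_le _ i
    _ ≤ ‖A‖ * ‖EuclideanSpace.single j (1 : 𝕜)‖ := A.l2_opNorm_mulVec _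
    _ = ‖A‖ := by simp

theorem norm_trace_le_card_mul_l2_opNorm (A : Matrix n n 𝕜) :
    ‖trace A‖ ≤ Fintype.card n * ‖A‖ :=
  calc ‖trace A‖ ≤ ∑ i, ‖A i i‖ := norm_sum_le _ _
    _ ≤ ∑ _i : n, ‖A‖ := Finset.sum_le_sum fun i _ ↦ A.norm_entry_le_l2_opNorm i i
    _ = Fintype.card n * ‖A‖ := by simp

theorem l2_opNorm_one_sub_mul_conjTranspose_le_one [DecidableEq m] {B : Matrix m n 𝕜}
    (hB : Bᴴ * B = 1) : ‖1 - B * Bᴴ‖ ≤ 1 := by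
  refine IsStarProjection.norm_le _ (IsStarProjection.one_sub ⟨?_, ?_⟩)
  · rw [IsIdempotentElem, Matrix.mul_assoc, ← Matrix.mul_assoc Bᴴ, hB, Matrix.one_mul]
  · rw [IsSelfAdjoint, star_eq_conjTranspose, conjTranspose_mul, conjTranspose_conjTranspose]

end L2OpNorm

section Real

variable {m n : Type*} [Fintype m] [Fintype n] [DecidableEq n]

theorem trace_div_card_le_l2_opNorm (A : Matrix n n ℝ) : trace A / Fintype.card n ≤ ‖A‖ := by
  rcases isEmpty_or_nonempty n with hn | hn
  · simp [trace]
  · rw [div_le_iff₀' (by simp [Fintype.card_pos])]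
    exact (le_abs_self _).trans (norm_trace_le_card_mul_l2_opNorm A)

theorem l2_opNorm_transpose_mul_self (A : Matrix m n ℝ) : ‖Aᵀ * A‖ = ‖A‖ * ‖A‖ := by
  simpa [conjTranspose_eq_transpose_of_trivial] using l2_opNorm_conjTranspose_mul_self A

end Real

section OrthonormalColumns

variable {α m n : Type*} [CommRing α] [Fintype m] [Fintype n] [DecidableEq m] [DecidableEq n]
  {A B : Matrix m n α}

theorem transpose_mul_one_sub_mul_eq (hA : Aᵀ * A = 1) :
    Aᵀ * (1 - B * Bᵀ) * A = Aᵀ * (A * Aᵀ - B * Bᵀ) * A := by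
  simp only [Matrix.mul_sub, Matrix.sub_mul, Matrix.mul_one, ← Matrix.mul_assoc, hA,
    Matrix.one_mul]

theorem trace_transpose_mul_one_sub_mul (hA : Aᵀ * A = 1) :
    trace (Aᵀ * (1 - B * Bᵀ) * A) = Fintype.card n - trace (B * Bᵀ * A * Aᵀ) := by
  rw [Matrix.mul_sub, Matrix.sub_mul, Matrix.mul_one, hA, trace_sub, trace_one,
    Matrix.mul_assoc, trace_mul_comm Aᵀ]

theorem transpose_mul_sub_mul_eq (hA : Aᵀ * A = 1) (hB : Bᵀ * B = 1) :
    Aᵀ * (A * Aᵀ - B * Bᵀ) * A =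
      ((1 - B * Bᵀ) * (A - B))ᵀ * ((1 - B * Bᵀ) * (A - B)) := by
  have hQB : (1 - B * Bᵀ) * B = 0 := by
    rw [Matrix.sub_mul, Matrix.one_mul, Matrix.mul_assoc, hB, Matrix.mul_one, sub_self]
  rw [Matrix.mul_sub (1 - B * Bᵀ), hQB, sub_zero, transpose_mul, transpose_sub, transpose_one,
    transpose_mul, transpose_transpose]
  simp only [Matrix.mul_sub, Matrix.sub_mul, Matrix.mul_one, Matrix.one_mul, Matrix.mul_assoc]
  simp only [← Matrix.mul_assoc Aᵀ A, ← Matrix.mul_assoc Bᵀ B, hA, hB, Matrix.one_mul]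
  abel

end OrthonormalColumns

theorem l2_opNorm_transpose_mul_sub_mul_le {m n : Type*} [Fintype m] [Fintype n]
    [DecidableEq m] [DecidableEq n] {A B : Matrix m n ℝ} (hA : Aᵀ * A = 1) (hB : Bᵀ * B = 1) :
    ‖Aᵀ * (A * Aᵀ - B * Bᵀ) * A‖ ≤ ‖B - A‖ ^ 2 := by
  have hQ : ‖1 - B * Bᵀ‖ ≤ 1 := by
    simpa [conjTranspose_eq_transpose_of_trivial] using
      l2_opNorm_one_sub_mul_conjTranspose_le_one (B := B)
        (by rwa [conjTranspose_eq_transpose_of_trivial])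
  have hQAB : ‖(1 - B * Bᵀ) * (A - B)‖ ≤ ‖B - A‖ :=
    calc ‖(1 - B * Bᵀ) * (A - B)‖ ≤ ‖1 - B * Bᵀ‖ * ‖A - B‖ := l2_opNorm_mul _ _
      _ ≤ ‖B - A‖ := by
        rw [norm_sub_rev A]; exact mul_le_of_le_one_left (norm_nonneg _) hQ
  rw [transpose_mul_sub_mul_eq hA hB, l2_opNorm_transpose_mul_self, ← sq]
  gcongr

end Matrix

theorem stmt3_general {p r : ℕ} (hr : 1 ≤ r)
    (A2 B2 : Matrix (Fin p) (Fin r) ℝ)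
    (hA : A2ᵀ * A2 = 1) (hB : B2ᵀ * B2 = 1) :
    (1 / (r : ℝ)) * Matrix.trace (A2ᵀ * (1 - B2 * B2ᵀ) * A2) ≤
      specNorm (A2ᵀ * (A2 * A2ᵀ - B2 * B2ᵀ) * A2) ∧
    specNorm (A2ᵀ * (A2 * A2ᵀ - B2 * B2ᵀ) * A2) ≤ 2 * (specNorm (B2 - A2)) ^ 2 ∧
    Real.sqrt (1 - (1 / (r : ℝ)) * Matrix.trace (B2 * B2ᵀ * A2 * A2ᵀ)) ≤
      Real.sqrt 2 * specNorm (B2 - A2) := by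
  change _ ≤ ‖A2ᵀ * (A2 * A2ᵀ - B2 * B2ᵀ) * A2‖ ∧ ‖A2ᵀ * (A2 * A2ᵀ - B2 * B2ᵀ) * A2‖ ≤
    2 * ‖B2 - A2‖ ^ 2 ∧ _ ≤ _ * ‖B2 - A2‖
  have mean_le : (1 / (r : ℝ)) * trace (A2ᵀ * (1 - B2 * B2ᵀ) * A2) ≤
      ‖A2ᵀ * (A2 * A2ᵀ - B2 * B2ᵀ) * A2‖ := by
    rw [transpose_mul_one_sub_mul_eq hA, one_div_mul_eq_div]
    simpa using trace_div_card_le_l2_opNorm (A2ᵀ * (A2 * A2ᵀ - B2 * B2ᵀ) * A2)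
  have norm_le : ‖A2ᵀ * (A2 * A2ᵀ - B2 * B2ᵀ) * A2‖ ≤ 2 * ‖B2 - A2‖ ^ 2 :=
    (l2_opNorm_transpose_mul_sub_mul_le hA hB).trans (by nlinarith [sq_nonneg ‖B2 - A2‖])
  have dist_sq_eq : 1 - (1 / (r : ℝ)) * trace (B2 * B2ᵀ * A2 * A2ᵀ) =
      (1 / (r : ℝ)) * trace (A2ᵀ * (1 - B2 * B2ᵀ) * A2) := by
    have : (r : ℝ) ≠ 0 := by positivity
    rw [trace_transpose_mul_one_sub_mul hA, Fintype.card_fin]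
    field_simp
  refine ⟨mean_le, norm_le, ?_⟩
  calc √(1 - (1 / (r : ℝ)) * trace (B2 * B2ᵀ * A2 * A2ᵀ))
      ≤ √(2 * ‖B2 - A2‖ ^ 2) := Real.sqrt_le_sqrt (dist_sq_eq ▸ mean_le.trans norm_le)
    _ = √2 * ‖B2 - A2‖ := by rw [Real.sqrt_mul zero_le_two, Real.sqrt_sq (norm_nonneg _)]

theorem stmt3 {p r : ℕ} (hr : 1 ≤ r) (hpr : r ≤ p)
    (A2 B2 : Matrix (Fin p) (Fin r) ℝ)
    (hA : A2ᵀ * A2 = 1) (hB : B2ᵀ * B2 = 1) :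
    (1 / (r : ℝ)) * Matrix.trace (A2ᵀ * (1 - B2 * B2ᵀ) * A2) ≤
      specNorm (A2ᵀ * (A2 * A2ᵀ - B2 * B2ᵀ) * A2) ∧
    specNorm (A2ᵀ * (A2 * A2ᵀ - B2 * B2ᵀ) * A2) ≤ 2 * (specNorm (B2 - A2)) ^ 2 ∧
    Real.sqrt (1 - (1 / (r : ℝ)) * Matrix.trace (B2 * B2ᵀ * A2 * A2ᵀ)) ≤
      Real.sqrt 2 * specNorm (B2 - A2) :=
  stmt3_general hr A2 B2 hA hB
end

section
/- Let λ_1 ≥ λ_2 ≥ … ≥ λ_p > 0 be real numbers and ω > 0. Define IC(l) = Σ_{j=1}^{l} λ_{p+1−j} + (p−l)ω for l = 1,…,p, and let r̂ = max{j : 1 ≤ j ≤ p, λ_{p+1−j} ≤ ω} (assume this set is nonempty and that λ_{p+1−j} ≠ ω for all j). Then r̂ is the unique minimizer of IC over {1,…,p}. -/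
/-!
Write `μ j = λ_{p+1-j}`, so that `μ` is increasing. Moving from `l` to `l + 1` changes the
criterion by `μ (l + 1) - ω`, hence `IC` decreases exactly while `μ` stays below `ω` and
increases afterwards; `r̂` is the point where `μ` crosses `ω`.
-/

open Finset

noncomputable def infoCriterion (f : ℕ → ℝ) (c : ℝ) (n l : ℕ) : ℝ :=
  ∑ j ∈ Icc 1 l, f j + ((n - l : ℕ) : ℝ) * c

section InfoCriterion

variable {f : ℕ → ℝ} {c : ℝ} {n : ℕ}

theorem infoCriterion_eq_add_sum_sub {a b : ℕ} (hab : a ≤ b) (hbn : b ≤ n) :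
    infoCriterion f c n b = infoCriterion f c n a + ∑ j ∈ Ioc a b, (f j - c) := by
  have hsplit : ∑ j ∈ Icc 1 a, f j + ∑ j ∈ Ioc a b, f j = ∑ j ∈ Icc 1 b, f j := by
    rw [← zero_add 1, Icc_add_one_left_eq_Ioc, Icc_add_one_left_eq_Ioc]
    exact sum_Ioc_consecutive f (Nat.zero_le a) hab
  have hcast : ((n - a : ℕ) : ℝ) = ((n - b : ℕ) : ℝ) + ((b - a : ℕ) : ℝ) := by
    rw [← Nat.cast_add]; congr 1; omega
  simp only [infoCriterion, sum_sub_distrib, sum_const, Nat.card_Ioc, nsmul_eq_mul, ← hsplit,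
    hcast]
  ring

theorem infoCriterion_lt_of_lt_of_forall_lt {a b : ℕ} (hab : a < b) (hbn : b ≤ n)
    (h : ∀ j ∈ Ioc a b, f j < c) : infoCriterion f c n b < infoCriterion f c n a := by
  rw [infoCriterion_eq_add_sum_sub hab.le hbn, add_lt_iff_neg_left]
  exact sum_neg (fun j hj => sub_neg.mpr (h j hj)) (nonempty_Ioc.mpr hab)

theorem infoCriterion_lt_of_lt_of_forall_gt {a b : ℕ} (hab : a < b) (hbn : b ≤ n)
    (h : ∀ j ∈ Ioc a b, c < f j) : infoCriterion f c n a < infoCriterion f c n b := by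
  rw [infoCriterion_eq_add_sum_sub hab.le hbn, lt_add_iff_pos_right]
  exact sum_pos (fun j hj => sub_pos.mpr (h j hj)) (nonempty_Ioc.mpr hab)

theorem infoCriterion_lt_of_crossing {r l : ℕ} (hrn : r ≤ n)
    (hbelow : ∀ j, 1 ≤ j → j ≤ r → f j < c) (habove : ∀ j, r < j → j ≤ n → c < f j)
    (hln : l ≤ n) (hlr : l ≠ r) : infoCriterion f c n r < infoCriterion f c n l := by
  rcases hlr.lt_or_gt with hlt | hgt
  · exact infoCriterion_lt_of_lt_of_forall_lt hlt hrn fun j hj =>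
      hbelow j (Nat.one_le_of_lt (mem_Ioc.mp hj).1) (mem_Ioc.mp hj).2
  · exact infoCriterion_lt_of_lt_of_forall_gt hgt hln fun j hj =>
      habove j (mem_Ioc.mp hj).1 ((mem_Ioc.mp hj).2.trans hln)

end InfoCriterion

theorem stmt9_general (p : ℕ) (lam : ℕ → ℝ) (ω : ℝ)
    (hdec : ∀ i j, 1 ≤ i → i ≤ j → j ≤ p → lam j ≤ lam i)
    (hne : ∀ j, 1 ≤ j → j ≤ p → lam (p + 1 - j) ≠ ω)
    (rhat : ℕ) (hrp : rhat ≤ p)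
    (hrmem : lam (p + 1 - rhat) ≤ ω)
    (hrmax : ∀ j, 1 ≤ j → j ≤ p → lam (p + 1 - j) ≤ ω → j ≤ rhat) :
    ∀ l, 1 ≤ l → l ≤ p → l ≠ rhat →
      (∑ j ∈ Finset.Icc 1 rhat, lam (p + 1 - j)) + ((p - rhat : ℕ) : ℝ) * ω <
      (∑ j ∈ Finset.Icc 1 l, lam (p + 1 - j)) + ((p - l : ℕ) : ℝ) * ω := by
  intro l _ hlp hlr
  have hbelow : ∀ j, 1 ≤ j → j ≤ rhat → lam (p + 1 - j) < ω := fun j hj1 hjr =>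
    lt_of_le_of_ne ((hdec _ _ (by omega) (by omega) (by omega)).trans hrmem)
      (hne j hj1 (by omega))
  have habove : ∀ j, rhat < j → j ≤ p → ω < lam (p + 1 - j) := fun j hjr hjp =>
    not_le.mp fun hle => absurd (hrmax j (by omega) hjp hle) (by omega)
  exact infoCriterion_lt_of_crossing hrp hbelow habove hlp hlr

theorem stmt9 (p : ℕ) (hp : 1 ≤ p) (lam : ℕ → ℝ) (ω : ℝ) (hω : 0 < ω)
    (hpos : ∀ j, 1 ≤ j → j ≤ p → 0 < lam j)
    (hdec : ∀ i j, 1 ≤ i → i ≤ j → j ≤ p → lam j ≤ lam i)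
    (hne : ∀ j, 1 ≤ j → j ≤ p → lam (p + 1 - j) ≠ ω)
    (rhat : ℕ) (hr1 : 1 ≤ rhat) (hrp : rhat ≤ p)
    (hrmem : lam (p + 1 - rhat) ≤ ω)
    (hrmax : ∀ j, 1 ≤ j → j ≤ p → lam (p + 1 - j) ≤ ω → j ≤ rhat) :
    ∀ l, 1 ≤ l → l ≤ p → l ≠ rhat →
      (∑ j ∈ Finset.Icc 1 rhat, lam (p + 1 - j)) + ((p - rhat : ℕ) : ℝ) * ω <
      (∑ j ∈ Finset.Icc 1 l, lam (p + 1 - j)) + ((p - l : ℕ) : ℝ) * ω :=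
  stmt9_general p lam ω hdec hne rhat hrp hrmem hrmax
end
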